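/- Let Σ and Σ̂ be real symmetric positive semidefinite d×d matrices, λ > 0, and 0 ≤ c̃ < 1/2. If ‖(Σ + λI)^{-1/2}·(Σ − Σ̂)·(Σ + λI)^{-1/2}‖ ≤ c̃, then ‖(Σ̂ + λI)^{-1/2}·(Σ̂ − Σ)·(Σ̂ + λI)^{-1/2}‖ ≤ c̃/(1 − c̃). -/

import Mathlib

/-!
With `A = Σ + λI` and `B = Σ̂ + λI` we have `Σ - Σ̂ = A - B`. For a self-adjoint `X`, the
continuous functional calculus gives `‖X‖ ≤ t ↔ -t ≤ X ≤ t` in the Loewner order, and conjugating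
by the invertible `A^{1/2}` turns the hypothesis into `-c A ≤ A - B ≤ c A`. The upper bound gives
`(1 - c) A ≤ B`, hence `±(B - A) ≤ c A ≤ c/(1 - c) B`; conjugating back by `B^{-1/2}` is the claim.
-/

open Matrix MeasureTheory

/-- The operator norm of a real `d × d` matrix induced by the Euclidean norm on `ℝ^d`. -/
noncomputable def opNorm {d : ℕ} (A : Matrix (Fin d) (Fin d) ℝ) : ℝ :=
  ‖Matrix.toEuclideanCLM (𝕜 := ℝ) A‖

/-- The Euclidean norm `‖x‖₂` of a vector `x ∈ ℝ^d`. -/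
noncomputable def enorm2 {d : ℕ} (x : Fin d → ℝ) : ℝ :=
  Real.sqrt (∑ i, x i ^ 2)

/-- Apply a scalar function to the eigenvalues of a symmetric matrix (continuous
functional calculus); junk value `0` if the matrix is not symmetric. -/
noncomputable def matFun {d : ℕ} (A : Matrix (Fin d) (Fin d) ℝ) (h : ℝ → ℝ) :
    Matrix (Fin d) (Fin d) ℝ :=
  if hA : A.IsHermitian then
    (hA.eigenvectorUnitary : Matrix (Fin d) (Fin d) ℝ) *
      Matrix.diagonal (fun i => h (hA.eigenvalues i)) *
      star (hA.eigenvectorUnitary : Matrix (Fin d) (Fin d) ℝ)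
  else 0

open scoped MatrixOrder Matrix.Norms.L2Operator Ring

lemma IsUnit.star_left_conjugate_le_conjugate_iff {R : Type*} [Ring R] [StarRing R]
    [PartialOrder R] [StarOrderedRing R] {u a b : R} (hu : IsUnit u) :
    star u * a * u ≤ star u * b * u ↔ a ≤ b := by
  rw [← sub_nonneg, ← sub_mul, ← mul_sub, hu.star_left_conjugate_nonneg_iff, sub_nonneg]

lemma sub_mem_Icc_smul_swap {E : Type*} [AddCommGroup E] [PartialOrder E] [IsOrderedAddMonoid E]
    [Module ℝ E] [PosSMulMono ℝ E] {x y : E} {c : ℝ} (hc0 : 0 ≤ c) (hc1 : c < 1)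
    (h : x - y ∈ Set.Icc (-(c • x)) (c • x)) :
    y - x ∈ Set.Icc (-((c / (1 - c)) • y)) ((c / (1 - c)) • y) := by
  obtain ⟨hlo, hhi⟩ := h
  have hxy : (1 - c) • x ≤ y := by
    rw [sub_smul, one_smul]
    exact sub_le_comm.mp hhi
  have hcx : c • x ≤ (c / (1 - c)) • y := by
    calc c • x = (c / (1 - c)) • ((1 - c) • x) := by
          rw [smul_smul, div_mul_cancel₀ c (sub_ne_zero.mpr hc1.ne')]
      _ ≤ (c / (1 - c)) • y := smul_le_smul_of_nonneg_left hxy (div_nonneg hc0 (by linarith))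
  refine ⟨?_, ?_⟩
  · rw [neg_le, neg_sub]
    exact hhi.trans hcx
  · rw [← neg_sub]
    exact (neg_le.mp hlo).trans hcx

section CFC

variable {A : Type*} [NormedRing A] [StarRing A] [NormedAlgebra ℝ A] [PartialOrder A]
  [StarOrderedRing A] [IsometricContinuousFunctionalCalculus ℝ A IsSelfAdjoint]
  [NonnegSpectrumClass ℝ A]

lemma IsSelfAdjoint.norm_le_iff_mem_Icc {a : A} (ha : IsSelfAdjoint a) {r : ℝ} (hr : 0 ≤ r) :
    ‖a‖ ≤ r ↔ a ∈ Set.Icc (-algebraMap ℝ A r) (algebraMap ℝ A r) := by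
  rw [Set.mem_Icc, ← map_neg, algebraMap_le_iff_le_spectrum ha, le_algebraMap_iff_spectrum_le ha,
    ← forall₂_and]
  conv_lhs => rw [← cfc_id ℝ a, norm_cfc_le_iff id a hr]
  simp only [id, Real.norm_eq_abs, abs_le]

lemma IsSelfAdjoint.norm_inverse_conj_le_iff {a s : A} (ha : IsSelfAdjoint a)
    (hs : IsSelfAdjoint s) (hu : IsUnit s) {t : ℝ} (ht : 0 ≤ t) :
    ‖s⁻¹ʳ * a * s⁻¹ʳ‖ ≤ t ↔ a ∈ Set.Icc (-(t • (s * s))) (t • (s * s)) := by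
  have hr : IsSelfAdjoint s⁻¹ʳ := by
    rw [IsSelfAdjoint, ← Ring.inverse_star, hs.star_eq]
  have hconj : s * (s⁻¹ʳ * a * s⁻¹ʳ) * s = a := by
    simp only [← mul_assoc, Ring.mul_inverse_cancel s hu, one_mul]
    rw [mul_assoc, Ring.inverse_mul_cancel s hu, mul_one]
  have hscalar : s * algebraMap ℝ A t * s = t • (s * s) := by
    rw [Algebra.algebraMap_eq_smul_one, mul_smul_comm, smul_mul_assoc, mul_one]
  have hconjSA : IsSelfAdjoint (s⁻¹ʳ * a * s⁻¹ʳ) := by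
    simpa only [hr.star_eq] using ha.conjugate' s⁻¹ʳ
  rw [hconjSA.norm_le_iff_mem_Icc ht, Set.mem_Icc, Set.mem_Icc,
    ← hu.star_left_conjugate_le_conjugate_iff,
    ← hu.star_left_conjugate_le_conjugate_iff (b := algebraMap ℝ A t),
    hs.star_eq, hconj, mul_neg, neg_mul, hscalar]

open CFC in
lemma IsSelfAdjoint.norm_inverse_sqrt_conj_le_iff {a c : A} (ha : IsSelfAdjoint a)
    (hc : IsStrictlyPositive c) {t : ℝ} (ht : 0 ≤ t) :
    ‖(sqrt c)⁻¹ʳ * a * (sqrt c)⁻¹ʳ‖ ≤ t ↔ a ∈ Set.Icc (-(t • c)) (t • c) := by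
  rw [ha.norm_inverse_conj_le_iff (sqrt_nonneg c).isSelfAdjoint
    (isUnit_sqrt_iff_isStrictlyPositive.mpr hc) ht, sqrt_mul_sqrt_self c hc.nonneg]

end CFC

section Matrix

variable {d : ℕ}

lemma matFun_eq_cfc {X : Matrix (Fin d) (Fin d) ℝ} (hX : X.IsHermitian) (f : ℝ → ℝ) :
    matFun X f = cfc f X := by
  rw [hX.cfc_eq, matFun, dif_pos hX, IsHermitian.cfc]
  simp [Unitary.conjStarAlgAut_apply, Function.comp_def]

lemma matFun_sqrt_eq_sqrt {X : Matrix (Fin d) (Fin d) ℝ} (hX : X.PosSemidef) :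
    matFun X Real.sqrt = CFC.sqrt X := by
  rw [matFun_eq_cfc hX.isHermitian, CFC.sqrt_eq_real_sqrt X hX.nonneg, cfcₙ_eq_cfc]

lemma opNorm_inv_sqrt_conj_le_iff {X M : Matrix (Fin d) (Fin d) ℝ} (hX : X.PosDef)
    (hM : M.IsHermitian) {t : ℝ} (ht : 0 ≤ t) :
    opNorm ((matFun X Real.sqrt)⁻¹ * M * (matFun X Real.sqrt)⁻¹) ≤ t ↔
      M ∈ Set.Icc (-(t • X)) (t • X) := by
  rw [matFun_sqrt_eq_sqrt hX.posSemidef, nonsing_inv_eq_ringInverse]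
  -- `opNorm` unfolds to the norm of the scoped instance `Matrix.Norms.L2Operator`.
  exact IsSelfAdjoint.norm_inverse_sqrt_conj_le_iff hM.isSelfAdjoint hX.isStrictlyPositive ht

end Matrix

theorem statement3_general {d : ℕ} (S Shat : Matrix (Fin d) (Fin d) ℝ)
    (hS : S.PosSemidef) (hShat : Shat.PosSemidef) (lam c : ℝ)
    (hlam : 0 < lam) (hc0 : 0 ≤ c) (hc : c < 1 / 2)
    (h : opNorm ((matFun (S + lam • 1) Real.sqrt)⁻¹ * (S - Shat) *
        (matFun (S + lam • 1) Real.sqrt)⁻¹) ≤ c) :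
    opNorm ((matFun (Shat + lam • 1) Real.sqrt)⁻¹ * (Shat - S) *
        (matFun (Shat + lam • 1) Real.sqrt)⁻¹) ≤ c / (1 - c) := by
  have hlamI : (lam • 1 : Matrix (Fin d) (Fin d) ℝ).PosDef := Matrix.PosDef.one.smul hlam
  have hA := Matrix.PosDef.posSemidef_add hS hlamI
  have hB := Matrix.PosDef.posSemidef_add hShat hlamI
  rw [opNorm_inv_sqrt_conj_le_iff hA (hS.isHermitian.sub hShat.isHermitian) hc0,
    ← add_sub_add_right_eq_sub S Shat (lam • 1)] at h
  rw [opNorm_inv_sqrt_conj_le_iff hB (hShat.isHermitian.sub hS.isHermitian)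
      (div_nonneg hc0 (by linarith)),
    ← add_sub_add_right_eq_sub Shat S (lam • 1)]
  exact sub_mem_Icc_smul_swap hc0 (by linarith) h

/-- If `Σ, Σ̂` are PSD, `λ > 0`, `0 ≤ c̃ < 1/2` and
`‖(Σ+λI)^{-1/2} (Σ - Σ̂) (Σ+λI)^{-1/2}‖ ≤ c̃`, then
`‖(Σ̂+λI)^{-1/2} (Σ̂ - Σ) (Σ̂+λI)^{-1/2}‖ ≤ c̃/(1-c̃)`. -/
theorem statement3 {d : ℕ} (hd : 0 < d) (S Shat : Matrix (Fin d) (Fin d) ℝ)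
    (hS : S.PosSemidef) (hShat : Shat.PosSemidef) (lam c : ℝ)
    (hlam : 0 < lam) (hc0 : 0 ≤ c) (hc : c < 1 / 2)
    (h : opNorm ((matFun (S + lam • 1) Real.sqrt)⁻¹ * (S - Shat) *
        (matFun (S + lam • 1) Real.sqrt)⁻¹) ≤ c) :
    opNorm ((matFun (Shat + lam • 1) Real.sqrt)⁻¹ * (Shat - S) *
        (matFun (Shat + lam • 1) Real.sqrt)⁻¹) ≤ c / (1 - c) :=
  statement3_general S Shat hS hShat lam c hlam hc0 hc h
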